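/- arXiv:1707.07237 — 2 statements merged into one kernel-verified Lean document; each statement's English description precedes it below -/
import Mathlib

section
/- Let (E,d) be a compact metric space and (μ_x)_{x∈E} a family of Borel probability measures on C(E,E) concentrated on Lipschitz maps, and let α ∈ (0,1]. Set r := sup_{x≠y} ∫ (d(T(x),T(y))/d(x,y))^α μ_x(dT) and R_α := sup_{x≠y} ‖μ_x − μ_y‖_TV / d(x,y)^α, and assume both are finite. Then for every φ ∈ H_α(E): m_α(Pφ) ≤ r · m_α(φ) + R_α · sup|φ|, and hence ‖Pφ‖_α ≤ r ‖φ‖_α + (1 + R_α) sup|φ|. -/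
/-!
Write `Pφ x - Pφ y = ∫ (φ (T x) - φ (T y)) dμ_x + (∫ φ (T y) dμ_x - ∫ φ (T y) dμ_y)`.
Since `m_α(φ) d(Tx, Ty)^α = m_α(φ) d(x, y)^α (d(Tx, Ty) / d(x, y))^α`, the first term is at most
`r m_α(φ) d(x, y)^α`. The second is at most `sup|φ| ‖μ_x - μ_y‖_TV`: splitting `φ (T y)` into its
positive and negative parts, each part is handled by `μ ≤ (μ - ν) + ν`, which follows from a Hahn
decomposition. The bound on `‖Pφ‖_α` then only needs `sup|Pφ| ≤ sup|φ|`.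
-/

open MeasureTheory Filter Set

/-- Markov operator of a place-dependent iterated function system:
`P φ x = ∫ φ (T x) dμ_x(T)`. -/
noncomputable def IFSPx {E : Type*} [MetricSpace E] [MeasurableSpace C(E, E)]
    (μx : E → Measure C(E, E)) (φ : E → ℝ) : E → ℝ :=
  fun x => ∫ T : C(E, E), φ (T x) ∂(μx x)

/-- `sup |φ|`. -/
noncomputable def supAbs {E : Type*} (φ : E → ℝ) : ℝ := ⨆ x, |φ x|

/-- The α-Hölder seminorm `m_α(φ)`, expressed as the least admissible Hölder constant. -/
noncomputable def holderSemi {E : Type*} [MetricSpace E] (α : ℝ) (φ : E → ℝ) : ℝ :=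
  sInf {m : ℝ | 0 ≤ m ∧ ∀ x y : E, |φ x - φ y| ≤ m * dist x y ^ α}

/-- The α-Hölder norm `‖φ‖_α = sup|φ| + m_α(φ)`. -/
noncomputable def holderNorm {E : Type*} [MetricSpace E] (α : ℝ) (φ : E → ℝ) : ℝ :=
  supAbs φ + holderSemi α φ

/-- Total variation norm `‖μ − ν‖_TV` of the difference of two (finite) measures. -/
noncomputable def tvDist {Ω : Type*} [MeasurableSpace Ω] (μ ν : Measure Ω) : ENNReal :=
  (μ - ν) Set.univ + (ν - μ) Set.univ

namespace MeasureTheory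

variable {Ω : Type*} [MeasurableSpace Ω] {μ ν : Measure Ω}

theorem abs_integral_le_mul_of_abs_le_mul_of_lintegral_le {f w : Ω → ℝ} {c r : ℝ} (hc : 0 ≤ c)
    (hr : 0 ≤ r) (hf : ∀ ω, |f ω| ≤ c * w ω)
    (hw : ∫⁻ ω, ENNReal.ofReal (w ω) ∂μ ≤ ENNReal.ofReal r) : |∫ ω, f ω ∂μ| ≤ c * r := by
  refine (norm_integral_le_lintegral_norm f).trans
    (ENNReal.toReal_le_of_le_ofReal (mul_nonneg hc hr) ?_)
  calc ∫⁻ ω, ENNReal.ofReal ‖f ω‖ ∂μ ≤ ∫⁻ ω, ENNReal.ofReal c * ENNReal.ofReal (w ω) ∂μ :=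
        lintegral_mono fun ω => by
          rw [← ENNReal.ofReal_mul hc]
          exact ENNReal.ofReal_le_ofReal (hf ω)
    _ = ENNReal.ofReal c * ∫⁻ ω, ENNReal.ofReal (w ω) ∂μ :=
        lintegral_const_mul' _ _ ENNReal.ofReal_ne_top
    _ ≤ ENNReal.ofReal (c * r) := by
        rw [ENNReal.ofReal_mul hc]
        gcongr

section Finite

variable [IsFiniteMeasure μ] [IsFiniteMeasure ν] {S : ℝ}

theorem Measure.le_sub_add : μ ≤ μ - ν + ν := by
  obtain ⟨s, hs, hνμ, hμν⟩ := hahn_decomposition μ ν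
  refine Measure.le_iff.2 fun t ht => ?_
  have hsub : (μ - ν) (t ∩ s) = μ (t ∩ s) - ν (t ∩ s) := by
    have hle : ν.restrict s ≤ μ.restrict s := Measure.le_iff.2 fun u hu => by
      simpa only [Measure.restrict_apply hu] using hνμ _ (hu.inter hs) inter_subset_right
    rw [← Measure.restrict_apply ht, restrict_sub_eq_restrict_sub_restrict hs,
      Measure.sub_apply ht hle, Measure.restrict_apply ht, Measure.restrict_apply ht]
  calc μ t = μ (t ∩ s) + μ (t \ s) := (measure_inter_add_sdiff t hs).symm
    _ ≤ (μ (t ∩ s) - ν (t ∩ s)) + ν (t ∩ s) + ν (t \ s) := by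
      rw [tsub_add_cancel_of_le (hνμ _ (ht.inter hs) inter_subset_right)]
      exact add_le_add_right (hμν _ (ht.diff hs) fun _ h => h.2) _
    _ = (μ - ν) (t ∩ s) + ν t := by rw [add_assoc, measure_inter_add_sdiff t hs, hsub]
    _ ≤ (μ - ν) t + ν t := by gcongr; exact inter_subset_left

theorem integral_sub_integral_le_of_nonneg_of_le {h : Ω → ℝ} (hm : Measurable h) (h0 : 0 ≤ h)
    (hS : ∀ ω, h ω ≤ S) : ∫ ω, h ω ∂μ - ∫ ω, h ω ∂ν ≤ S * (μ - ν).real univ := by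
  have hbound : ∀ ω, ‖h ω‖ ≤ S := fun ω => (Real.norm_of_nonneg (h0 ω)).trans_le (hS ω)
  have hint (κ : Measure Ω) [IsFiniteMeasure κ] : Integrable h κ :=
    .of_bound hm.aestronglyMeasurable S (ae_of_all _ hbound)
  have hsub : ∫ ω, h ω ∂(μ - ν) ≤ S * (μ - ν).real univ :=
    (le_abs_self _).trans (norm_integral_le_of_norm_le_const (ae_of_all _ hbound))
  rw [sub_le_iff_le_add]
  calc ∫ ω, h ω ∂μ ≤ ∫ ω, h ω ∂(μ - ν + ν) :=
        integral_mono_measure Measure.le_sub_add (ae_of_all _ h0) (hint _)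
    _ = ∫ ω, h ω ∂(μ - ν) + ∫ ω, h ω ∂ν := integral_add_measure (hint _) (hint _)
    _ ≤ S * (μ - ν).real univ + ∫ ω, h ω ∂ν := by gcongr

theorem abs_integral_sub_integral_le_mul_tvDist {g : Ω → ℝ} (hm : Measurable g) (hS0 : 0 ≤ S)
    (hS : ∀ ω, |g ω| ≤ S) : |∫ ω, g ω ∂μ - ∫ ω, g ω ∂ν| ≤ S * (tvDist μ ν).toReal := by
  set gp : Ω → ℝ := fun ω => max (g ω) 0
  set gn : Ω → ℝ := fun ω => max (-g ω) 0
  have hgp : Measurable gp := hm.max measurable_const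
  have hgn : Measurable gn := hm.neg.max measurable_const
  have hgp0 : 0 ≤ gp := fun ω => le_max_right _ _
  have hgn0 : 0 ≤ gn := fun ω => le_max_right _ _
  have hgpS : ∀ ω, gp ω ≤ S := fun ω => max_le ((le_abs_self _).trans (hS ω)) hS0
  have hgnS : ∀ ω, gn ω ≤ S := fun ω => max_le ((neg_le_abs _).trans (hS ω)) hS0
  have hsplit (κ : Measure Ω) [IsFiniteMeasure κ] :
      ∫ ω, g ω ∂κ = ∫ ω, gp ω ∂κ - ∫ ω, gn ω ∂κ := by
    have hint {f : Ω → ℝ} (hf : Measurable f) (hfS : ∀ ω, |f ω| ≤ S) : Integrable f κ :=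
      .of_bound hf.aestronglyMeasurable S (ae_of_all _ hfS)
    rw [← integral_sub (hint hgp fun ω => (abs_of_nonneg (hgp0 ω)).trans_le (hgpS ω))
      (hint hgn fun ω => (abs_of_nonneg (hgn0 ω)).trans_le (hgnS ω))]
    simp only [gp, gn, max_zero_sub_max_neg_zero_eq_self]
  have htv : (tvDist μ ν).toReal = (μ - ν).real univ + (ν - μ).real univ :=
    ENNReal.toReal_add (measure_ne_top _ _) (measure_ne_top _ _)
  have h₁ := integral_sub_integral_le_of_nonneg_of_le (μ := μ) (ν := ν) hgp hgp0 hgpS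
  have h₂ := integral_sub_integral_le_of_nonneg_of_le (μ := ν) (ν := μ) hgn hgn0 hgnS
  have h₃ := integral_sub_integral_le_of_nonneg_of_le (μ := ν) (ν := μ) hgp hgp0 hgpS
  have h₄ := integral_sub_integral_le_of_nonneg_of_le (μ := μ) (ν := ν) hgn hgn0 hgnS
  rw [hsplit μ, hsplit ν, htv, mul_add, abs_le]
  constructor <;> linarith

end Finite

end MeasureTheory

open Topology

section Holder

variable {E : Type*} [MetricSpace E] {α C : ℝ} {φ : E → ℝ}

theorem continuous_of_abs_sub_le_mul_rpow (hα : 0 < α)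
    (hφ : ∀ x y, |φ x - φ y| ≤ C * dist x y ^ α) : Continuous φ := by
  refine continuous_iff_continuousAt.2 fun x => tendsto_iff_dist_tendsto_zero.2 ?_
  have hlim : Tendsto (fun y => C * dist y x ^ α) (𝓝 x) (𝓝 0) := by
    have := ((continuous_id.dist (continuous_const (y := x))).rpow_const
      fun _ => Or.inr hα.le).tendsto x
    simpa [Real.zero_rpow hα.ne'] using this.const_mul C
  exact squeeze_zero (fun _ => dist_nonneg) (fun y => (Real.dist_eq _ _).trans_le (hφ y x)) hlim

theorem holderSemi_nonneg : 0 ≤ holderSemi α φ :=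
  Real.sInf_nonneg fun _ hm => hm.1

theorem holderSemi_le (hC : 0 ≤ C) (hφ : ∀ x y, |φ x - φ y| ≤ C * dist x y ^ α) :
    holderSemi α φ ≤ C :=
  csInf_le ⟨0, fun _ hm => hm.1⟩ ⟨hC, hφ⟩

theorem abs_sub_le_holderSemi_mul_rpow (hα : 0 < α)
    (hφ : ∃ M, ∀ x y, |φ x - φ y| ≤ M * dist x y ^ α) (x y : E) :
    |φ x - φ y| ≤ holderSemi α φ * dist x y ^ α := by
  obtain rfl | hxy := eq_or_ne x y
  · simp [Real.zero_rpow hα.ne']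
  obtain ⟨M, hM⟩ := hφ
  have hne : {m : ℝ | 0 ≤ m ∧ ∀ x y : E, |φ x - φ y| ≤ m * dist x y ^ α}.Nonempty :=
    ⟨max M 0, le_max_right _ _, fun x y => (hM x y).trans (by gcongr; exact le_max_left _ _)⟩
  have hd : 0 < dist x y ^ α := Real.rpow_pos_of_pos (dist_pos.2 hxy) α
  rw [← div_le_iff₀ hd]
  exact le_csInf hne fun m hm => (div_le_iff₀ hd).2 (hm.2 x y)

end Holder

section SupAbs

variable {E : Type*} {C : ℝ} {φ : E → ℝ}

theorem supAbs_nonneg : 0 ≤ supAbs φ :=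
  Real.iSup_nonneg fun _ => abs_nonneg _

theorem abs_le_supAbs (hφ : BddAbove (range fun x => |φ x|)) (x : E) : |φ x| ≤ supAbs φ :=
  le_ciSup hφ x

theorem supAbs_le (hC : 0 ≤ C) (hφ : ∀ x, |φ x| ≤ C) : supAbs φ ≤ C :=
  Real.iSup_le hφ hC

end SupAbs

section MarkovOperator

variable {E : Type*} [MetricSpace E] [MeasurableSpace C(E, E)] {μx : E → Measure C(E, E)}
  {φ : E → ℝ} {S : ℝ}

theorem abs_IFSPx_le [∀ x, IsProbabilityMeasure (μx x)] (hS : ∀ x, |φ x| ≤ S) (x : E) :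
    |IFSPx μx φ x| ≤ S := by
  simpa [IFSPx] using norm_integral_le_of_norm_le_const (μ := μx x) (f := fun T => φ (T x))
    (ae_of_all _ fun T => hS (T x))

theorem abs_IFSPx_sub_IFSPx_le [OpensMeasurableSpace C(E, E)] [∀ x, IsFiniteMeasure (μx x)]
    {α r Rα m : ℝ} (hα : 0 < α) (hr0 : 0 ≤ r)
    (hr : ∀ x y : E, x ≠ y →
      ∫⁻ T : C(E, E), ENNReal.ofReal ((dist (T x) (T y) / dist x y) ^ α) ∂(μx x)
        ≤ ENNReal.ofReal r)
    (hRα0 : 0 ≤ Rα)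
    (hR : ∀ x y : E, x ≠ y → tvDist (μx x) (μx y) ≤ ENNReal.ofReal (Rα * dist x y ^ α))
    (hφc : Continuous φ) (hm0 : 0 ≤ m) (hm : ∀ x y, |φ x - φ y| ≤ m * dist x y ^ α)
    (hS : ∀ x, |φ x| ≤ S) (x y : E) :
    |IFSPx μx φ x - IFSPx μx φ y| ≤ (r * m + Rα * S) * dist x y ^ α := by
  obtain rfl | hxy := eq_or_ne x y
  · simp [Real.zero_rpow hα.ne']
  have hS0 : 0 ≤ S := (abs_nonneg _).trans (hS x)
  have hd : 0 < dist x y := dist_pos.2 hxy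
  have heval (z : E) : Measurable fun T : C(E, E) => φ (T z) :=
    (hφc.comp (continuous_eval_const z)).measurable
  have hint (z w : E) : Integrable (fun T : C(E, E) => φ (T z)) (μx w) :=
    .of_bound (heval z).aestronglyMeasurable S (ae_of_all _ fun T => hS (T z))
  have hsplit : IFSPx μx φ x - IFSPx μx φ y = ∫ T, (φ (T x) - φ (T y)) ∂(μx x)
      + (∫ T, φ (T y) ∂(μx x) - ∫ T, φ (T y) ∂(μx y)) := by
    rw [integral_sub (hint x x) (hint y x)]
    simp only [IFSPx]
    ring
  have hcontract : |∫ T, (φ (T x) - φ (T y)) ∂(μx x)| ≤ m * dist x y ^ α * r := by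
    refine abs_integral_le_mul_of_abs_le_mul_of_lintegral_le (by positivity) hr0 (fun T => ?_)
      (hr x y hxy)
    rw [mul_assoc, ← Real.mul_rpow dist_nonneg (div_nonneg dist_nonneg hd.le),
      mul_div_cancel₀ _ hd.ne']
    exact hm _ _
  have htv : |∫ T, φ (T y) ∂(μx x) - ∫ T, φ (T y) ∂(μx y)| ≤ S * (Rα * dist x y ^ α) :=
    (abs_integral_sub_integral_le_mul_tvDist (heval y) hS0 fun T => hS (T y)).trans <|
      mul_le_mul_of_nonneg_left (ENNReal.toReal_le_of_le_ofReal (by positivity) (hR x y hxy)) hS0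
  calc |IFSPx μx φ x - IFSPx μx φ y|
      ≤ |∫ T, (φ (T x) - φ (T y)) ∂(μx x)|
        + |∫ T, φ (T y) ∂(μx x) - ∫ T, φ (T y) ∂(μx y)| := hsplit ▸ abs_add_le _ _
    _ ≤ m * dist x y ^ α * r + S * (Rα * dist x y ^ α) := add_le_add hcontract htv
    _ = (r * m + Rα * S) * dist x y ^ α := by ring

end MarkovOperator

theorem stmt4_general {E : Type*} [MetricSpace E] [CompactSpace E]
    [MeasurableSpace C(E, E)] [BorelSpace C(E, E)]
    (μx : E → Measure C(E, E)) (hprob : ∀ x, IsProbabilityMeasure (μx x))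
    (α : ℝ) (hα0 : 0 < α)
    (r : ℝ) (hr0 : 0 ≤ r)
    (hr : ∀ x y : E, x ≠ y →
      ∫⁻ T : C(E, E), ENNReal.ofReal ((dist (T x) (T y) / dist x y) ^ α) ∂(μx x)
        ≤ ENNReal.ofReal r)
    (Rα : ℝ) (hRα0 : 0 ≤ Rα)
    (hR : ∀ x y : E, x ≠ y →
      tvDist (μx x) (μx y) ≤ ENNReal.ofReal (Rα * dist x y ^ α))
    (φ : E → ℝ) (hφ : ∃ M : ℝ, ∀ x y : E, |φ x - φ y| ≤ M * dist x y ^ α) :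
    (∀ x y : E, |IFSPx μx φ x - IFSPx μx φ y|
        ≤ (r * holderSemi α φ + Rα * supAbs φ) * dist x y ^ α) ∧
      holderNorm α (IFSPx μx φ) ≤ r * holderNorm α φ + (1 + Rα) * supAbs φ := by
  have := hprob
  have hφc : Continuous φ := continuous_of_abs_sub_le_mul_rpow hα0 hφ.choose_spec
  have hS : ∀ x, |φ x| ≤ supAbs φ := abs_le_supAbs (isCompact_range hφc.abs).bddAbove
  have hP := abs_IFSPx_sub_IFSPx_le hα0 hr0 hr hRα0 hR hφc holderSemi_nonneg
    (abs_sub_le_holderSemi_mul_rpow hα0 hφ) hS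
  refine ⟨hP, ?_⟩
  have hsemi := holderSemi_le (add_nonneg (mul_nonneg hr0 holderSemi_nonneg)
    (mul_nonneg hRα0 supAbs_nonneg)) hP
  have hsup := supAbs_le supAbs_nonneg (abs_IFSPx_le (μx := μx) hS)
  unfold holderNorm
  linarith [mul_nonneg hr0 (supAbs_nonneg (φ := φ))]

/-- with `r := sup_{x≠y} ∫ (d(Tx,Ty)/d(x,y))^α dμ_x(T)` and
`R_α := sup_{x≠y} ‖μ_x − μ_y‖_TV / d(x,y)^α` both finite, every α-Hölder `φ` satisfies
`m_α(Pφ) ≤ r m_α(φ) + R_α sup|φ|`, hence `‖Pφ‖_α ≤ r ‖φ‖_α + (1+R_α) sup|φ|`. -/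
theorem stmt4 {E : Type*} [MetricSpace E] [CompactSpace E] [Nonempty E]
    [MeasurableSpace C(E, E)] [BorelSpace C(E, E)]
    (μx : E → Measure C(E, E)) (hprob : ∀ x, IsProbabilityMeasure (μx x))
    (hLip : ∀ x, μx x {T : C(E, E) | ∃ K : NNReal, LipschitzWith K ⇑T} = 1)
    (α : ℝ) (hα0 : 0 < α) (hα1 : α ≤ 1)
    (r : ℝ) (hr0 : 0 ≤ r)
    (hr : ∀ x y : E, x ≠ y →
      ∫⁻ T : C(E, E), ENNReal.ofReal ((dist (T x) (T y) / dist x y) ^ α) ∂(μx x)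
        ≤ ENNReal.ofReal r)
    (Rα : ℝ) (hRα0 : 0 ≤ Rα)
    (hR : ∀ x y : E, x ≠ y →
      tvDist (μx x) (μx y) ≤ ENNReal.ofReal (Rα * dist x y ^ α))
    (φ : E → ℝ) (hφ : ∃ M : ℝ, ∀ x y : E, |φ x - φ y| ≤ M * dist x y ^ α) :
    (∀ x y : E, |IFSPx μx φ x - IFSPx μx φ y|
        ≤ (r * holderSemi α φ + Rα * supAbs φ) * dist x y ^ α) ∧
      holderNorm α (IFSPx μx φ) ≤ r * holderNorm α φ + (1 + Rα) * supAbs φ :=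
  stmt4_general μx hprob α hα0 r hr0 hr Rα hRα0 hR φ hφ
end

section
/- Let α ∈ (0,1] and let p ∈ H_α[0,1] take values in [0,1], with q = 1−p, and assume p(0) < 1 and q(1) < 1. Let ν_p be the probability measure on [0,1] with density f_p(x) = (1/C_p) exp(∫_x^{1/2} p(t)/t dt + ∫_{1/2}^x q(t)/(1−t) dt) with respect to Lebesgue measure, where C_p = ∫₀¹ exp(∫_x^{1/2} p(t)/t dt + ∫_{1/2}^x q(t)/(1−t) dt) dx. Then ν_p is Q-invariant: ∫ Qφ dν_p = ∫ φ dν_p for every bounded Borel function φ on [0,1]. -/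
/-!
For `0 < x < 1` the operator `Q` has the transition density `k(x, u) = p(x)/x` for `u < x` and
`q(x)/(1 - x)` for `u > x`, so by Fubini `∫ f Qφ = ∫ φ(u) (∫ f(x) k(x, u) dx) du`, and invariance
of `f dx` reduces to the stationarity equation `∫ f(x) k(x, u) dx = f(u)`. Splitting at `x = u`,
the left side is `∫_u^1 p f / x + ∫_0^u q f / (1 - x)`, whose derivative in `u` is
`f (q/(1 - u) - p/u) = f'`. Hence the two sides differ by a constant, which vanishes because both
have the same integral over `(0, 1)` (Fubini once more, with `∫ k(x, u) du = 1`).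

All of this needs `f` to be integrable, which is where `p(0) < 1` and `q(1) < 1` enter: for
`p(0) < a < 1`, `x ↦ x^a f(x)` is increasing near `0` (its logarithmic derivative is
`(a - p)/x + q/(1 - x) ≥ 0`), so `f = O(x^(-a))` there; the endpoint `1` is the endpoint `0` of
the reflected weight `t ↦ 1 - p(1 - t)`.
-/

open MeasureTheory Filter Set

noncomputable def DFQ (p : ℝ → ℝ) (φ : ℝ → ℝ) : ℝ → ℝ :=
  fun x => p x * (∫ t in (0 : ℝ)..1, φ (t * x)) +
    (1 - p x) * ∫ t in (0 : ℝ)..1, φ (t * x + 1 - t)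

def HolderOnI (α : ℝ) (M : ℝ) (φ : ℝ → ℝ) : Prop :=
  ∀ x ∈ Set.Icc (0 : ℝ) 1, ∀ y ∈ Set.Icc (0 : ℝ) 1, |φ x - φ y| ≤ M * |x - y| ^ α

/-- The unnormalised density `C_p f_p`. -/
noncomputable def DFdensity (p : ℝ → ℝ) (x : ℝ) : ℝ :=
  Real.exp ((∫ t in x..(1 / 2 : ℝ), p t / t) + ∫ t in (1 / 2 : ℝ)..x, (1 - p t) / (1 - t))

open Topology

theorem integral_integral_mul_swap_of_bdd {α β : Type*} [MeasurableSpace α] [MeasurableSpace β]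
    {μ : Measure α} {ν : Measure β} [SFinite μ] [SFinite ν] {K : α × β → ℝ}
    (hK : Integrable K (μ.prod ν)) {φ : β → ℝ} (hφ : AEStronglyMeasurable φ ν) {C : ℝ}
    (hC : ∀ u, |φ u| ≤ C) :
    ∫ x, ∫ u, K (x, u) * φ u ∂ν ∂μ = ∫ u, (∫ x, K (x, u) ∂μ) * φ u ∂ν := by
  have hKφ : Integrable (fun z => K z * φ z.2) (μ.prod ν) :=
    hK.mul_bdd hφ.comp_snd (ae_of_all _ fun z => (Real.norm_eq_abs (φ z.2)).symm ▸ hC z.2)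
  rw [integral_integral_swap (f := fun x u => K (x, u) * φ u) hKφ]
  simp only [integral_mul_const]

theorem integral_withDensity_ofReal_div_const {α : Type*} [MeasurableSpace α] {μ : Measure α}
    {f : α → ℝ} (hf : AEMeasurable f μ) (hf0 : ∀ x, 0 ≤ f x) (c : ℝ) (g : α → ℝ) :
    ∫ x, g x ∂μ.withDensity (fun x => ENNReal.ofReal (f x / c)) =
      max c⁻¹ 0 * ∫ x, f x * g x ∂μ := by
  rw [integral_withDensity_eq_integral_toReal_smul₀ (hf.div_const c).ennreal_ofReal
    (ae_of_all _ fun _ => ENNReal.ofReal_lt_top), ← integral_const_mul]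
  congr 1 with x
  have : max (f x * c⁻¹) 0 = f x * max c⁻¹ 0 := by rw [mul_max_of_nonneg _ _ (hf0 x), mul_zero]
  rw [ENNReal.toReal_ofReal', smul_eq_mul, div_eq_mul_inv, this]
  ring

theorem HolderOnI.continuousOn {α M : ℝ} {p : ℝ → ℝ} (hp : HolderOnI α M p) (hα : 0 < α) :
    ContinuousOn p (Icc 0 1) := by
  intro x hx
  rw [ContinuousWithinAt, tendsto_iff_dist_tendsto_zero]
  have hlim : Tendsto (fun y => M * |y - x| ^ α) (𝓝[Icc 0 1] x) (𝓝 0) := by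
    have : Continuous fun y => M * |y - x| ^ α := by fun_prop (disch := exact hα.le)
    simpa [Real.zero_rpow hα.ne'] using this.continuousWithinAt.tendsto (s := Icc 0 1) (x := x)
  refine squeeze_zero' (.of_forall fun _ => dist_nonneg) ?_ hlim
  filter_upwards [self_mem_nhdsWithin] with y hy
  simpa [Real.dist_eq] using hp y hy x hx

section Density

variable {p : ℝ → ℝ}

theorem continuousOn_div_id (hp : ContinuousOn p (Ioo 0 1)) :
    ContinuousOn (fun x => p x / x) (Ioo 0 1) :=
  hp.div continuousOn_id fun _ hx => hx.1.ne'

theorem continuousOn_one_sub_div_one_sub (hp : ContinuousOn p (Ioo 0 1)) :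
    ContinuousOn (fun x => (1 - p x) / (1 - x)) (Ioo 0 1) :=
  (continuousOn_const.sub hp).div (continuousOn_const.sub continuousOn_id)
    fun _ hx => (sub_pos.2 hx.2).ne'

theorem DFdensity_pos (p : ℝ → ℝ) (x : ℝ) : 0 < DFdensity p x := Real.exp_pos _

theorem hasDerivAt_DFdensity (hp : ContinuousOn p (Ioo 0 1)) {x : ℝ} (hx : x ∈ Ioo 0 1) :
    HasDerivAt (DFdensity p) (DFdensity p x * ((1 - p x) / (1 - x) - p x / x)) x := by
  have hsub : uIcc x (1 / 2) ⊆ Ioo 0 1 := ordConnected_Ioo.uIcc_subset hx (by norm_num)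
  have h₁ := continuousOn_div_id hp
  have h₂ := continuousOn_one_sub_div_one_sub hp
  have hd₁ := intervalIntegral.integral_hasDerivAt_left (h₁.mono hsub).intervalIntegrable
    (h₁.stronglyMeasurableAtFilter isOpen_Ioo x hx) (h₁.continuousAt (isOpen_Ioo.mem_nhds hx))
  have hd₂ := intervalIntegral.integral_hasDerivAt_right
    (h₂.mono (uIcc_comm x _ ▸ hsub)).intervalIntegrable
    (h₂.stronglyMeasurableAtFilter isOpen_Ioo x hx) (h₂.continuousAt (isOpen_Ioo.mem_nhds hx))
  refine (hd₁.add hd₂).exp.congr_deriv ?_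
  rw [DFdensity, Pi.add_apply]
  ring

theorem continuousOn_DFdensity (hp : ContinuousOn p (Ioo 0 1)) :
    ContinuousOn (DFdensity p) (Ioo 0 1) := fun _ hx =>
  (hasDerivAt_DFdensity hp hx).continuousAt.continuousWithinAt

theorem monotoneOn_rpow_mul_DFdensity (hp : ContinuousOn p (Ioo 0 1)) {a δ : ℝ} (ha : a ≤ 1)
    (hδ : δ < 1) (hpa : ∀ x ∈ Ioo 0 δ, p x ≤ a) :
    MonotoneOn (fun x => x ^ a * DFdensity p x) (Ioc 0 δ) := by
  have hsub : Ioc 0 δ ⊆ Ioo 0 1 := fun x hx => ⟨hx.1, hx.2.trans_lt hδ⟩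
  have hderiv : ∀ x ∈ Ioo 0 1, HasDerivAt (fun x => x ^ a * DFdensity p x)
      (a * x ^ (a - 1) * DFdensity p x +
        x ^ a * (DFdensity p x * ((1 - p x) / (1 - x) - p x / x))) x := fun x hx =>
    (Real.hasDerivAt_rpow_const (Or.inl hx.1.ne')).mul (hasDerivAt_DFdensity hp hx)
  refine monotoneOn_of_hasDerivWithinAt_nonneg (convex_Ioc 0 δ)
    (fun x hx => (hderiv x (hsub hx)).continuousAt.continuousWithinAt)
    (fun x hx => (hderiv x (hsub (interior_subset hx))).hasDerivWithinAt) fun x hx => ?_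
  rw [interior_Ioc] at hx
  have hx1 : 0 < 1 - x := sub_pos.2 (hx.2.trans hδ)
  have hpx := hpa x hx
  have hpos : 0 ≤ x ^ a * DFdensity p x * ((a - p x) / x + (1 - p x) / (1 - x)) :=
    mul_nonneg (mul_nonneg (Real.rpow_nonneg hx.1.le a) (DFdensity_pos p x).le)
      (add_nonneg (div_nonneg (by linarith) hx.1.le) (div_nonneg (by linarith) hx1.le))
  convert hpos using 1
  rw [Real.rpow_sub_one hx.1.ne']
  field_simp
  ring

theorem intervalIntegrable_DFdensity_zero_half (hp : ContinuousOn p (Icc 0 1)) (hp0 : p 0 < 1) :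
    IntervalIntegrable (DFdensity p) volume 0 (1 / 2) := by
  obtain ⟨a, hp0a, ha⟩ := exists_between hp0
  obtain ⟨u, hu, hua⟩ : ∃ u ∈ Ioi (0 : ℝ), Ioo 0 u ⊆ {x | p x < a} := by
    refine mem_nhdsGT_iff_exists_Ioo_subset.1 ?_
    rw [← nhdsWithin_Ioo_eq_nhdsGT zero_lt_one]
    exact nhdsWithin_mono _ Ioo_subset_Icc_self
      ((hp 0 (left_mem_Icc.2 zero_le_one)).eventually (gt_mem_nhds hp0a))
  set δ := min u (1 / 2)
  have hδ : 0 < δ := lt_min hu one_half_pos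
  have hδ1 : δ < 1 := (min_le_right _ _).trans_lt (by norm_num)
  have hf := continuousOn_DFdensity (hp.mono Ioo_subset_Icc_self)
  have hmono := monotoneOn_rpow_mul_DFdensity (hp.mono Ioo_subset_Icc_self) ha.le hδ1
    fun x hx => (hua ⟨hx.1, hx.2.trans_le (min_le_left _ _)⟩).le
  have hbound : ∀ x ∈ Ioc 0 δ, ‖DFdensity p x‖ ≤ δ ^ a * DFdensity p δ * x ^ (-a) := by
    intro x hx
    have := hmono hx (right_mem_Ioc.2 hδ) hx.2
    rw [Real.norm_of_nonneg (DFdensity_pos p x).le, Real.rpow_neg hx.1.le,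
      ← div_eq_mul_inv, le_div_iff₀ (Real.rpow_pos_of_pos hx.1 a)]
    linarith
  have h₁ : IntervalIntegrable (DFdensity p) volume 0 δ := by
    refine ((intervalIntegral.intervalIntegrable_rpow' (r := -a) (by linarith)).const_mul
      (δ ^ a * DFdensity p δ)).mono_fun' ?_ ?_
    all_goals rw [uIoc_of_le hδ.le]
    · exact (hf.mono fun x hx => ⟨hx.1, hx.2.trans_lt hδ1⟩).aestronglyMeasurable measurableSet_Ioc
    · exact ae_restrict_of_forall_mem measurableSet_Ioc hbound
  have h₂ : IntervalIntegrable (DFdensity p) volume δ (1 / 2) :=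
    (hf.mono (ordConnected_Ioo.uIcc_subset ⟨hδ, hδ1⟩ (by norm_num))).intervalIntegrable
  exact h₁.trans h₂

theorem DFdensity_one_sub (p : ℝ → ℝ) (x : ℝ) :
    DFdensity (fun t => 1 - p (1 - t)) x = DFdensity p (1 - x) := by
  have h₁ := intervalIntegral.integral_comp_sub_left (fun s => (1 - p s) / (1 - s)) 1
    (a := x) (b := 1 / 2)
  have h₂ := intervalIntegral.integral_comp_sub_left (fun s => p s / s) 1 (a := 1 / 2) (b := x)
  norm_num at h₁ h₂
  simp only [DFdensity, sub_sub_cancel, h₁, h₂, add_comm]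

theorem integrableOn_DFdensity (hp : ContinuousOn p (Icc 0 1)) (hp0 : p 0 < 1)
    (hq1 : 1 - p 1 < 1) : IntegrableOn (DFdensity p) (Ioo 0 1) := by
  have hleft := intervalIntegrable_DFdensity_zero_half hp hp0
  have hright := (intervalIntegrable_DFdensity_zero_half (p := fun t => 1 - p (1 - t))
    (continuousOn_const.sub (hp.comp (continuousOn_const.sub continuousOn_id)
      fun t ht => ⟨sub_nonneg.2 ht.2, sub_le_self _ ht.1⟩)) (by simpa using hq1)).comp_sub_left 1
  simp only [DFdensity_one_sub, sub_sub_cancel] at hright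
  norm_num at hright
  exact (intervalIntegrable_iff_integrableOn_Ioo_of_le zero_le_one).1 (hleft.trans hright.symm)

end Density

noncomputable def DFkernel (p : ℝ → ℝ) (x u : ℝ) : ℝ :=
  (Iio x).indicator (fun _ => p x / x) u + (Ioi x).indicator (fun _ => (1 - p x) / (1 - x)) u

section Kernel

variable {p : ℝ → ℝ}

theorem integral_DFkernel_mul {φ : ℝ → ℝ} (hφ : IntegrableOn φ (Ioo 0 1)) {x : ℝ}
    (hx : x ∈ Ioo 0 1) :
    ∫ u in Ioo 0 1, DFkernel p x u * φ u = DFQ p φ x := by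
  have h₁ : ∫ t in (0 : ℝ)..1, φ (t * x) = x⁻¹ * ∫ u in Ioo 0 x, φ u := by
    rw [intervalIntegral.integral_comp_mul_right φ hx.1.ne', zero_mul, one_mul, smul_eq_mul,
      intervalIntegral.integral_of_le hx.1.le, integral_Ioc_eq_integral_Ioo]
  have h₂ : ∫ t in (0 : ℝ)..1, φ (t * x + 1 - t) = (1 - x)⁻¹ * ∫ u in Ioo x 1, φ u := by
    have := intervalIntegral.integral_comp_sub_mul φ (sub_pos.2 hx.2).ne' 1 (a := 0) (b := 1)
    rw [mul_zero, mul_one, sub_zero, sub_sub_cancel, smul_eq_mul,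
      intervalIntegral.integral_of_le hx.2.le, integral_Ioc_eq_integral_Ioo] at this
    rw [← this]
    congr 1 with t
    ring_nf
  simp only [DFkernel, add_mul, ← indicator_mul_left]
  rw [integral_add ((hφ.const_mul _).indicator measurableSet_Iio)
    ((hφ.const_mul _).indicator measurableSet_Ioi), setIntegral_indicator measurableSet_Iio,
    setIntegral_indicator measurableSet_Ioi, Ioo_inter_Iio, Ioo_inter_Ioi, min_eq_right hx.2.le,
    max_eq_right hx.1.le, integral_const_mul, integral_const_mul, DFQ, h₁, h₂]
  ring

theorem integral_DFkernel (p : ℝ → ℝ) {x : ℝ} (hx : x ∈ Ioo 0 1) :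
    ∫ u in Ioo 0 1, DFkernel p x u = 1 := by
  simpa [DFQ] using integral_DFkernel_mul (p := p) (integrableOn_const (C := (1 : ℝ))
    measure_Ioo_lt_top.ne) hx

theorem DFkernel_nonneg {x : ℝ} (hx : x ∈ Ioo 0 1) (hpx : p x ∈ Icc 0 1) (u : ℝ) :
    0 ≤ DFkernel p x u :=
  add_nonneg (indicator_nonneg (fun _ _ => div_nonneg hpx.1 hx.1.le) _)
    (indicator_nonneg (fun _ _ => div_nonneg (sub_nonneg.2 hpx.2) (sub_pos.2 hx.2).le) _)

end Kernel

section Stationarity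

variable {p : ℝ → ℝ}

theorem integrable_DFdensity_mul_DFkernel (hp : ContinuousOn p (Ioo 0 1))
    (hp01 : ∀ x ∈ Ioo 0 1, p x ∈ Icc 0 1) (hf : IntegrableOn (DFdensity p) (Ioo 0 1)) :
    Integrable (fun z : ℝ × ℝ => DFdensity p z.1 * DFkernel p z.1 z.2)
      ((volume.restrict (Ioo 0 1)).prod (volume.restrict (Ioo 0 1))) := by
  have hw := (continuousOn_DFdensity hp).mul (continuousOn_div_id hp)
  have hv := (continuousOn_DFdensity hp).mul (continuousOn_one_sub_div_one_sub hp)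
  refine (integrable_prod_iff ?_).2 ⟨?_, ?_⟩
  · convert ((hw.aestronglyMeasurable measurableSet_Ioo).comp_fst.indicator
        (measurableSet_lt measurable_snd measurable_fst)).add
        ((hv.aestronglyMeasurable measurableSet_Ioo).comp_fst.indicator
        (measurableSet_lt measurable_fst measurable_snd)) using 1
    ext z
    simp only [DFkernel, Pi.add_apply, Pi.mul_apply, indicator_apply, mem_Iio, mem_Ioi,
      mem_ofPred_eq]
    split_ifs <;> ring
  · refine .of_forall fun x => ?_
    show Integrable (fun u => DFdensity p x * DFkernel p x u) _
    refine Integrable.const_mul ?_ _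
    exact (integrableOn_const measure_Ioo_lt_top.ne).indicator measurableSet_Iio |>.add
      ((integrableOn_const measure_Ioo_lt_top.ne).indicator measurableSet_Ioi)
  · refine hf.congr (ae_restrict_of_forall_mem measurableSet_Ioo fun x hx => ?_)
    simp_rw [Real.norm_of_nonneg (mul_nonneg (DFdensity_pos p x).le
      (DFkernel_nonneg hx (hp01 x hx) _))]
    rw [integral_const_mul, integral_DFkernel p hx, mul_one]

theorem intervalIntegrable_DFdensity_mul_div_id (hp : ContinuousOn p (Ioo 0 1))
    (hp01 : ∀ x ∈ Ioo 0 1, p x ∈ Icc 0 1) (hf : IntegrableOn (DFdensity p) (Ioo 0 1)) {u : ℝ}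
    (hu : u ∈ Ioo 0 1) :
    IntervalIntegrable (fun x => DFdensity p x * (p x / x)) volume u 1 := by
  have hsub : Ioo u 1 ⊆ Ioo 0 1 := Ioo_subset_Ioo_left hu.1.le
  rw [intervalIntegrable_iff_integrableOn_Ioo_of_le hu.2.le]
  refine (hf.mono_set hsub).mul_bdd (c := 1 / u)
    (((continuousOn_div_id hp).mono hsub).aestronglyMeasurable measurableSet_Ioo)
    (ae_restrict_of_forall_mem measurableSet_Ioo fun x hx => ?_)
  have hpx := hp01 x (hsub hx)
  rw [Real.norm_of_nonneg (div_nonneg hpx.1 (hu.1.trans hx.1).le)]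
  exact div_le_div₀ zero_le_one hpx.2 hu.1 hx.1.le

theorem intervalIntegrable_DFdensity_mul_one_sub_div_one_sub (hp : ContinuousOn p (Ioo 0 1))
    (hp01 : ∀ x ∈ Ioo 0 1, p x ∈ Icc 0 1) (hf : IntegrableOn (DFdensity p) (Ioo 0 1)) {u : ℝ}
    (hu : u ∈ Ioo 0 1) :
    IntervalIntegrable (fun x => DFdensity p x * ((1 - p x) / (1 - x))) volume 0 u := by
  have hsub : Ioo 0 u ⊆ Ioo 0 1 := Ioo_subset_Ioo_right hu.2.le
  rw [intervalIntegrable_iff_integrableOn_Ioo_of_le hu.1.le]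
  refine (hf.mono_set hsub).mul_bdd (c := 1 / (1 - u))
    (((continuousOn_one_sub_div_one_sub hp).mono hsub).aestronglyMeasurable measurableSet_Ioo)
    (ae_restrict_of_forall_mem measurableSet_Ioo fun x hx => ?_)
  have hpx := hp01 x (hsub hx)
  rw [Real.norm_of_nonneg (div_nonneg (sub_nonneg.2 hpx.2) (sub_pos.2 (hsub hx).2).le)]
  exact div_le_div₀ zero_le_one (by linarith [hpx.1]) (sub_pos.2 hu.2) (by linarith [hx.2])

theorem integral_DFdensity_mul_DFkernel_eq_add (hp : ContinuousOn p (Ioo 0 1))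
    (hp01 : ∀ x ∈ Ioo 0 1, p x ∈ Icc 0 1) (hf : IntegrableOn (DFdensity p) (Ioo 0 1)) {u : ℝ}
    (hu : u ∈ Ioo 0 1) :
    ∫ x in Ioo 0 1, DFdensity p x * DFkernel p x u =
      (∫ x in u..1, DFdensity p x * (p x / x)) +
        ∫ x in 0..u, DFdensity p x * ((1 - p x) / (1 - x)) := by
  have hw := intervalIntegrable_DFdensity_mul_div_id hp hp01 hf hu
  have hv := intervalIntegrable_DFdensity_mul_one_sub_div_one_sub hp hp01 hf hu
  rw [intervalIntegrable_iff_integrableOn_Ioo_of_le hu.2.le] at hw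
  rw [intervalIntegrable_iff_integrableOn_Ioo_of_le hu.1.le] at hv
  have hsplit : EqOn (fun x => DFdensity p x * DFkernel p x u)
      ((Ioo u 1).indicator (fun x => DFdensity p x * (p x / x)) +
        (Ioo 0 u).indicator (fun x => DFdensity p x * ((1 - p x) / (1 - x)))) (Ioo 0 1) := by
    intro x hx
    simp only [DFkernel, Pi.add_apply, indicator_apply, mem_Iio, mem_Ioi, mem_Ioo, hx.1, hx.2,
      true_and, and_true]
    split_ifs <;> ring
  rw [setIntegral_congr_fun measurableSet_Ioo hsplit,
    integral_add' (hw.restrict.integrable_indicator measurableSet_Ioo)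
      (hv.restrict.integrable_indicator measurableSet_Ioo),
    setIntegral_indicator measurableSet_Ioo, setIntegral_indicator measurableSet_Ioo,
    inter_eq_right.2 (Ioo_subset_Ioo_left hu.1.le), inter_eq_right.2 (Ioo_subset_Ioo_right hu.2.le),
    intervalIntegral.integral_of_le hu.2.le, intervalIntegral.integral_of_le hu.1.le,
    integral_Ioc_eq_integral_Ioo, integral_Ioc_eq_integral_Ioo]

theorem hasDerivAt_integral_DFdensity_mul_DFkernel (hp : ContinuousOn p (Ioo 0 1))
    (hp01 : ∀ x ∈ Ioo 0 1, p x ∈ Icc 0 1) (hf : IntegrableOn (DFdensity p) (Ioo 0 1)) {u : ℝ}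
    (hu : u ∈ Ioo 0 1) :
    HasDerivAt (fun u => ∫ x in Ioo 0 1, DFdensity p x * DFkernel p x u)
      (DFdensity p u * ((1 - p u) / (1 - u) - p u / u)) u := by
  have hw := (continuousOn_DFdensity hp).mul (continuousOn_div_id hp)
  have hv := (continuousOn_DFdensity hp).mul (continuousOn_one_sub_div_one_sub hp)
  have hd := (intervalIntegral.integral_hasDerivAt_left
    (intervalIntegrable_DFdensity_mul_div_id hp hp01 hf hu)
    (hw.stronglyMeasurableAtFilter isOpen_Ioo u hu) (hw.continuousAt (isOpen_Ioo.mem_nhds hu))).add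
    (intervalIntegral.integral_hasDerivAt_right
      (intervalIntegrable_DFdensity_mul_one_sub_div_one_sub hp hp01 hf hu)
      (hv.stronglyMeasurableAtFilter isOpen_Ioo u hu) (hv.continuousAt (isOpen_Ioo.mem_nhds hu)))
  refine (hd.congr_of_eventuallyEq ?_).congr_deriv (by ring)
  filter_upwards [isOpen_Ioo.mem_nhds hu] with y hy
  exact integral_DFdensity_mul_DFkernel_eq_add hp hp01 hf hy

theorem integral_DFdensity_mul_DFkernel (hp : ContinuousOn p (Ioo 0 1))
    (hp01 : ∀ x ∈ Ioo 0 1, p x ∈ Icc 0 1) (hf : IntegrableOn (DFdensity p) (Ioo 0 1)) {u : ℝ}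
    (hu : u ∈ Ioo 0 1) :
    ∫ x in Ioo 0 1, DFdensity p x * DFkernel p x u = DFdensity p u := by
  set G := fun u => ∫ x in Ioo 0 1, DFdensity p x * DFkernel p x u
  have hGf : ∀ y ∈ Ioo (0 : ℝ) 1, HasDerivAt (fun u => G u - DFdensity p u) 0 y := fun y hy =>
    ((hasDerivAt_integral_DFdensity_mul_DFkernel hp hp01 hf hy).sub
      (hasDerivAt_DFdensity hp hy)).congr_deriv (sub_self _)
  have hconst : ∀ y ∈ Ioo (0 : ℝ) 1, G y - DFdensity p y = G u - DFdensity p u := fun y hy =>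
    isOpen_Ioo.is_const_of_deriv_eq_zero isPreconnected_Ioo
      (fun z hz => (hGf z hz).differentiableAt.differentiableWithinAt)
      (fun z hz => (hGf z hz).deriv) hy hu
  have hGint : ∫ y in Ioo 0 1, G y = ∫ y in Ioo 0 1, DFdensity p y := by
    rw [← integral_integral_swap (integrable_DFdensity_mul_DFkernel hp hp01 hf)]
    refine setIntegral_congr_fun measurableSet_Ioo fun x hx => ?_
    rw [integral_const_mul, integral_DFkernel p hx, mul_one]
  have : ∫ y in Ioo 0 1, G y = ∫ y in Ioo 0 1, (DFdensity p y + (G u - DFdensity p u)) :=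
    setIntegral_congr_fun measurableSet_Ioo fun y hy => by
      simp only [← hconst y hy]; ring
  rw [integral_add hf (integrableOn_const measure_Ioo_lt_top.ne), hGint, setIntegral_const] at this
  simp only [Real.volume_real_Ioo, sub_zero, max_eq_left zero_le_one, one_smul,
    left_eq_add] at this
  exact sub_eq_zero.1 this

theorem integral_DFdensity_mul_DFQ (hp : ContinuousOn p (Ioo 0 1))
    (hp01 : ∀ x ∈ Ioo 0 1, p x ∈ Icc 0 1) (hf : IntegrableOn (DFdensity p) (Ioo 0 1))
    {φ : ℝ → ℝ} (hφ : Measurable φ) {C : ℝ} (hC : ∀ x, |φ x| ≤ C) :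
    ∫ x in Ioo 0 1, DFdensity p x * DFQ p φ x = ∫ x in Ioo 0 1, DFdensity p x * φ x := by
  have hφi : IntegrableOn φ (Ioo 0 1) := .of_bound measure_Ioo_lt_top hφ.aestronglyMeasurable C
    (ae_of_all _ fun x => (Real.norm_eq_abs (φ x)).symm ▸ hC x)
  calc ∫ x in Ioo 0 1, DFdensity p x * DFQ p φ x
      = ∫ x in Ioo 0 1, ∫ u in Ioo 0 1, DFdensity p x * DFkernel p x u * φ u :=
        setIntegral_congr_fun measurableSet_Ioo fun x hx => by
          simp only [mul_assoc, integral_const_mul, integral_DFkernel_mul hφi hx]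
    _ = ∫ u in Ioo 0 1, (∫ x in Ioo 0 1, DFdensity p x * DFkernel p x u) * φ u :=
        integral_integral_mul_swap_of_bdd (integrable_DFdensity_mul_DFkernel hp hp01 hf)
          hφ.aestronglyMeasurable hC
    _ = ∫ u in Ioo 0 1, DFdensity p u * φ u :=
        setIntegral_congr_fun measurableSet_Ioo fun u hu => by
          rw [integral_DFdensity_mul_DFkernel hp hp01 hf hu]

end Stationarity

theorem stmt14_general (α : ℝ) (hα0 : 0 < α)
    (p : ℝ → ℝ) (hpH : ∃ M : ℝ, HolderOnI α M p)
    (hp01 : ∀ x ∈ Set.Icc (0 : ℝ) 1, p x ∈ Set.Icc (0 : ℝ) 1)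
    (hp0 : p 0 < 1) (hq1 : 1 - p 1 < 1)
    (Cp : ℝ)
    (ν : Measure ℝ)
    (hν : ν = (volume.restrict (Set.Ioo (0 : ℝ) 1)).withDensity
      (fun x => ENNReal.ofReal (DFdensity p x / Cp))) :
    ∀ φ : ℝ → ℝ, Measurable φ → (∃ C : ℝ, ∀ x : ℝ, |φ x| ≤ C) →
      ∫ x, DFQ p φ x ∂ν = ∫ x, φ x ∂ν := by
  rintro φ hφ ⟨C, hC⟩
  obtain ⟨M, hM⟩ := hpH
  have hp := hM.continuousOn hα0
  have hp' := hp.mono Ioo_subset_Icc_self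
  have hf_meas := (continuousOn_DFdensity hp').aemeasurable (μ := volume) measurableSet_Ioo
  subst hν
  rw [integral_withDensity_ofReal_div_const hf_meas (fun x => (DFdensity_pos p x).le),
    integral_withDensity_ofReal_div_const hf_meas (fun x => (DFdensity_pos p x).le),
    integral_DFdensity_mul_DFQ hp' (fun x hx => hp01 x (Ioo_subset_Icc_self hx))
      (integrableOn_DFdensity hp hp0 hq1) hφ hC]

/-- for `p ∈ H_α[0,1]` with values in `[0,1]`, `p(0) < 1`, `q(1) < 1`, the
probability measure `ν_p` with density `f_p = DFdensity p / C_p` (with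
`C_p = ∫₀¹ DFdensity p`) with respect to Lebesgue measure is `Q`-invariant. -/
theorem stmt14 (α : ℝ) (hα0 : 0 < α) (hα1 : α ≤ 1)
    (p : ℝ → ℝ) (hpH : ∃ M : ℝ, HolderOnI α M p)
    (hp01 : ∀ x ∈ Set.Icc (0 : ℝ) 1, p x ∈ Set.Icc (0 : ℝ) 1)
    (hp0 : p 0 < 1) (hq1 : 1 - p 1 < 1)
    (Cp : ℝ) (hCp : Cp = ∫ x in Set.Ioo (0 : ℝ) 1, DFdensity p x)
    (ν : Measure ℝ)
    (hν : ν = (volume.restrict (Set.Ioo (0 : ℝ) 1)).withDensity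
      (fun x => ENNReal.ofReal (DFdensity p x / Cp))) :
    ∀ φ : ℝ → ℝ, Measurable φ → (∃ C : ℝ, ∀ x : ℝ, |φ x| ≤ C) →
      ∫ x, DFQ p φ x ∂ν = ∫ x, φ x ∂ν :=
  stmt14_general α hα0 p hpH hp01 hp0 hq1 Cp ν hν
end
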